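/- (Decoupling of tree OT at a constrained interior node) Let K factor over a tree 𝒯 = (𝒱, ℰ) as K_{i_1,…,i_J} = Π_{(j_1,j_2)∈ℰ} K^{(j_1,j_2)}_{i_{j_1},i_{j_2}} with strictly positive edge matrices, and let k ∈ 𝒱 be a non-leaf node. Removing k splits 𝒯 into subtrees 𝒯_1, …, 𝒯_d (each together with k). Then for any strictly positive vectors u_1,…,u_J and M = K ⊙ (u_1 ⊗ ⋯ ⊗ u_J), the conditional tensor factorizes across the subtrees: for every fixed index i_k, M restricted to marginal-index i_k equals (P_k(M)_{i_k})^{1−d} times the product over the subtrees of the corresponding restricted projections, i.e., the variables in different subtrees 𝒯_m are conditionally independent given the index i_k. -/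

import Mathlib

/-!
Every factor of `M` (an edge matrix entry or a vertex weight) only sees coordinates in one
`V m ∪ {k}`; the weight at `k` may go to any block. Grouping the factors by block writes
`M = ∏ m, f m` with `f m` depending on `V m ∪ {k}` only. Once `i_k` is fixed, the blocks are
disjoint sets of free coordinates, so summing a product of such factors over them splits into the
product of the block sums `σ m` (the sum of `f m` over the coordinates in `V m`). Hence
`P_k(M)_{i_k} = ∏ m, σ m` and `P_{V_m ∪ {k}}(M)(i) = f m i * ∏_{m' ≠ m} σ m'`, and the identity
reduces to `∏_m ∏_{m' ≠ m} σ m' = (∏ m, σ m) ^ (d - 1)`.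
-/

open Finset Function

section DependsOn

variable {ι : Type*} {α : ι → Type*} {M : Type*} [CommMonoid M]

lemma DependsOn.mul {f g : (Π i, α i) → M} {s : Set ι} (hf : DependsOn f s) (hg : DependsOn g s) :
    DependsOn (fun x => f x * g x) s :=
  fun _ _ h => congrArg₂ (· * ·) (hf h) (hg h)

lemma dependsOn_finset_prod {κ : Type*} {t : Finset κ} {f : κ → (Π i, α i) → M} {s : Set ι}
    (hf : ∀ m ∈ t, DependsOn (f m) s) : DependsOn (fun x => ∏ m ∈ t, f m x) s :=
  fun _ _ h => prod_congr rfl fun m hm => hf m hm h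

end DependsOn

lemma prod_prod_erase_eq_pow {β M : Type*} [Fintype β] [DecidableEq β] [CommMonoid M]
    (σ : β → M) : ∏ m, ∏ m' ∈ univ.erase m, σ m' = (∏ m, σ m) ^ (Fintype.card β - 1) := by
  rw [prod_comm' (t' := univ) (s' := fun m' => univ.erase m') (by simp [and_comm, ne_comm]),
    ← prod_pow]
  simp [card_erase_of_mem]

section Marginal

variable {ι α R : Type*} [Fintype ι] [DecidableEq ι] [Fintype α] [DecidableEq α]

variable [AddCommMonoid R] in
/-- `marginal S M i` is the paper's `P_S(M)` evaluated at the index `i`: the coordinates in `S`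
are held at `i`, all others are summed out. -/
def marginal (S : Finset ι) (M : (ι → α) → R) (i : ι → α) : R :=
  ∑ x ∈ univ.filter (fun x => ∀ s ∈ S, x s = i s), M x

variable [AddCommMonoid R] in
lemma marginal_univ (M : (ι → α) → R) (i : ι → α) : marginal univ M i = M i := by
  have : univ.filter (fun x : ι → α => ∀ s ∈ univ, x s = i s) = {i} := by
    ext x; simp [funext_iff]
  rw [marginal, this, sum_singleton]

variable [CommSemiring R]

lemma marginal_compl_union_mul {s t : Finset ι} (hst : Disjoint s t) {F G : (ι → α) → R}
    (hF : DependsOn F (↑t)ᶜ) (hG : DependsOn G (↑s)ᶜ) (i : ι → α) :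
    marginal (s ∪ t)ᶜ (fun x => F x * G x) i = marginal sᶜ F i * marginal tᶜ G i := by
  simp only [marginal, sum_mul_sum, ← sum_product']
  symm
  refine sum_nbij' (fun p => s.piecewise p.1 p.2) (fun x => (s.piecewise x i, t.piecewise x i))
    ?_ ?_ ?_ ?_ ?_
  all_goals simp only [mem_product, mem_filter, mem_univ, true_and, mem_compl, Prod.forall]
  · intro y z h j hj
    grind [piecewise_eq_of_notMem]
  · intro x h
    constructor <;> intro j hj <;> grind [piecewise_eq_of_notMem]
  · intro y z h
    ext j <;> by_cases hs : j ∈ s <;>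
      grind [piecewise_eq_of_mem, piecewise_eq_of_notMem, disjoint_left]
  · intro x h
    ext j
    grind [piecewise_eq_of_mem, piecewise_eq_of_notMem]
  · intro y z h
    congr 1
    · exact hF fun j hj => by grind [piecewise_eq_of_mem, piecewise_eq_of_notMem]
    · exact hG fun j hj => by grind [piecewise_eq_of_mem, piecewise_eq_of_notMem, disjoint_left]

lemma marginal_compl_biUnion_prod {β : Type*} [DecidableEq β] {V : β → Finset ι} {C : Finset ι}
    {T : Finset β} (hV : (T : Set β).PairwiseDisjoint V) (hC : ∀ m ∈ T, Disjoint (V m) C)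
    {f : β → (ι → α) → R} (hf : ∀ m ∈ T, DependsOn (f m) ↑(V m ∪ C)) (i : ι → α) :
    marginal (T.biUnion V)ᶜ (fun x => ∏ m ∈ T, f m x) i = ∏ m ∈ T, marginal (V m)ᶜ (f m) i := by
  induction T using Finset.induction_on with
  | empty => simp [marginal_univ]
  | insert a T ha ih =>
    rw [coe_insert, Set.pairwiseDisjoint_insert_of_notMem (mem_coe.not.2 ha)] at hV
    have hdisj : Disjoint (V a) (T.biUnion V) :=
      (disjoint_biUnion_right _ _ _).2 fun m hm => hV.2 m hm
    simp only [biUnion_insert, prod_insert ha]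
    rw [marginal_compl_union_mul hdisj, ih hV.1 (fun m hm => hC m (mem_insert_of_mem hm))
      (fun m hm => hf m (mem_insert_of_mem hm))]
    · refine (hf a (mem_insert_self a T)).mono ?_
      rw [Set.subset_compl_iff_disjoint_right, disjoint_coe, disjoint_union_left]
      exact ⟨hdisj, (disjoint_biUnion_right _ _ _).2 fun m hm => (hC m (mem_insert_of_mem hm)).symm⟩
    · refine dependsOn_finset_prod fun m hm => (hf m (mem_insert_of_mem hm)).mono ?_
      rw [Set.subset_compl_iff_disjoint_right, disjoint_coe, disjoint_union_left]
      exact ⟨(hV.2 m hm).symm, (hC a (mem_insert_self a T)).symm⟩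

variable {β : Type*} [Fintype β] [DecidableEq β] {k : ι} {V : β → Finset ι}

lemma compl_biUnion_eq_insert_compl_biUnion (hVk : ∀ m, k ∉ V m)
    (hVcover : ∀ j, j ≠ k → ∃ m, j ∈ V m) (hVdisj : Pairwise (Disjoint on V)) (T : Finset β) :
    (T.biUnion V)ᶜ = insert k (Tᶜ.biUnion V) := by
  ext j
  simp only [mem_compl, mem_insert, mem_biUnion, not_exists, not_and]
  constructor
  · intro hj
    by_cases hjk : j = k
    · exact Or.inl hjk
    · obtain ⟨m, hm⟩ := hVcover j hjk
      exact Or.inr ⟨m, fun hmT => hj m hmT hm, hm⟩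
  · rintro (rfl | ⟨m, hmT, hm⟩) m' hm' hjm'
    · exact hVk m' hjm'
    · exact disjoint_left.1 (hVdisj (ne_of_mem_of_not_mem hm' hmT)) hjm' hm

lemma marginal_compl_biUnion_prod_univ (hVk : ∀ m, k ∉ V m) (hVdisj : Pairwise (Disjoint on V))
    {f : β → (ι → α) → R} (hf : ∀ m, DependsOn (f m) ↑(insert k (V m))) (T : Finset β)
    (i : ι → α) :
    marginal (T.biUnion V)ᶜ (fun x => ∏ m, f m x) i
      = (∏ m ∈ Tᶜ, f m i) * ∏ m ∈ T, marginal (V m)ᶜ (f m) i := by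
  have hfix : ∀ x ∈ univ.filter (fun x => ∀ j ∈ (T.biUnion V)ᶜ, x j = i j), ∀ m ∈ Tᶜ,
      f m x = f m i := by
    intro x hx m hm
    refine hf m fun j hj => (mem_filter.1 hx).2 j ?_
    simp only [coe_insert, Set.mem_insert_iff, mem_coe] at hj
    simp only [mem_compl, mem_biUnion, not_exists, not_and]
    rintro m' hm' hjm'
    rcases hj with rfl | hj
    · exact hVk m' hjm'
    · exact disjoint_left.1 (hVdisj (ne_of_mem_of_not_mem hm' (mem_compl.1 hm))) hjm' hj
  calc marginal (T.biUnion V)ᶜ (fun x => ∏ m, f m x) i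
      = marginal (T.biUnion V)ᶜ (fun x => (∏ m ∈ Tᶜ, f m i) * ∏ m ∈ T, f m x) i :=
        sum_congr rfl fun x hx => by
          dsimp only
          rw [← prod_congr rfl (hfix x hx), mul_comm, prod_mul_prod_compl]
    _ = (∏ m ∈ Tᶜ, f m i) * marginal (T.biUnion V)ᶜ (fun x => ∏ m ∈ T, f m x) i :=
      (mul_sum _ _ _).symm
    _ = (∏ m ∈ Tᶜ, f m i) * ∏ m ∈ T, marginal (V m)ᶜ (f m) i := by
      rw [marginal_compl_biUnion_prod (C := {k}) (hVdisj.set_pairwise _)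
        (fun m _ => disjoint_singleton_right.2 (hVk m))
        (fun m _ => by rw [union_comm, ← insert_eq]; exact hf m)]

theorem mul_marginal_singleton_pow_eq_prod_marginal_insert (hVk : ∀ m, k ∉ V m)
    (hVcover : ∀ j, j ≠ k → ∃ m, j ∈ V m) (hVdisj : Pairwise (Disjoint on V))
    {f : β → (ι → α) → R} (hf : ∀ m, DependsOn (f m) ↑(insert k (V m)))
    {M : (ι → α) → R} (hM : ∀ x, M x = ∏ m, f m x) (i : ι → α) :
    M i * marginal {k} M i ^ (Fintype.card β - 1) = ∏ m, marginal (insert k (V m)) M i := by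
  obtain rfl : M = fun x => ∏ m, f m x := funext hM
  have hcompl := compl_biUnion_eq_insert_compl_biUnion hVk hVcover hVdisj
  have hk : {k} = (univ.biUnion V)ᶜ := by simp [hcompl]
  have hm : ∀ m, insert k (V m) = ((univ.erase m).biUnion V)ᶜ := by simp [hcompl, compl_erase]
  simp only [hk, hm, marginal_compl_biUnion_prod_univ hVk hVdisj hf, compl_univ, compl_erase,
    prod_empty, one_mul, insert_empty, prod_singleton, prod_mul_distrib, prod_prod_erase_eq_pow]

end Marginal

lemma exists_blockwise_factorization {ι α β R : Type*} [Fintype ι] [DecidableEq ι] [Fintype β]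
    [DecidableEq β] [Nonempty β] [CommMonoid R] {k : ι} {V : β → Finset ι}
    (hVcover : ∀ j, j ≠ k → ∃ m, j ∈ V m)
    {E : Finset (ι × ι)} (hEdge : ∀ e ∈ E, ∃ m, (e.1 ∈ V m ∨ e.1 = k) ∧ (e.2 ∈ V m ∨ e.2 = k))
    (K : ι → ι → α → α → R) (u : ι → α → R) :
    ∃ f : β → (ι → α) → R, (∀ m, DependsOn (f m) ↑(insert k (V m))) ∧
      ∀ x, (∏ e ∈ E, K e.1 e.2 (x e.1) (x e.2)) * ∏ j, u j (x j) = ∏ m, f m x := by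
  choose! edgeBlock hedgeBlock using hEdge
  have hvertex : ∀ j, ∃ m, j ∈ insert k (V m) := fun j => by
    by_cases hj : j = k
    · exact ⟨Classical.arbitrary β, hj ▸ mem_insert_self j _⟩
    · obtain ⟨m, hm⟩ := hVcover j hj
      exact ⟨m, mem_insert_of_mem hm⟩
  choose vertexBlock hvertexBlock using hvertex
  refine ⟨fun m x => (∏ e ∈ E with edgeBlock e = m, K e.1 e.2 (x e.1) (x e.2)) *
      ∏ j with vertexBlock j = m, u j (x j), fun m => ?_, fun x => ?_⟩
  · refine DependsOn.mul (dependsOn_finset_prod fun e he x y hxy => ?_)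
      (dependsOn_finset_prod fun j hj x y hxy => ?_)
    · obtain ⟨heE, rfl⟩ := mem_filter.1 he
      rw [hxy e.1 (by simpa [or_comm] using (hedgeBlock e heE).1),
        hxy e.2 (by simpa [or_comm] using (hedgeBlock e heE).2)]
    · obtain ⟨-, rfl⟩ := mem_filter.1 hj
      rw [hxy j (hvertexBlock j)]
  · rw [prod_mul_distrib, prod_fiberwise, prod_fiberwise]

theorem tree_decoupling_at_interior_node_general {n J d : ℕ}
    (E : Finset (Fin J × Fin J)) (G : SimpleGraph (Fin J)) [DecidableRel G.Adj]
    (K : Fin J → Fin J → Matrix (Fin n) (Fin n) ℝ)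
    (u : Fin J → Fin n → ℝ)
    (k : Fin J) (hk : 2 ≤ (G.neighborFinset k).card)
    (V : Fin d → Finset (Fin J))
    (hVk : ∀ m, k ∉ V m)
    (hVcover : ∀ x : Fin J, x ≠ k → ∃ m, x ∈ V m)
    (hVdisj : ∀ m m', m ≠ m' → Disjoint (V m) (V m'))
    (hEdge : ∀ e ∈ E, ∃ m, (e.1 ∈ V m ∨ e.1 = k) ∧ (e.2 ∈ V m ∨ e.2 = k))
    (M : (Fin J → Fin n) → ℝ)
    (hM : ∀ i, M i = (∏ e ∈ E, K e.1 e.2 (i e.1) (i e.2)) * ∏ j, u j (i j))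
    (i : Fin J → Fin n) :
    M i * (∑ i' : Fin J → Fin n, if i' k = i k then M i' else 0) ^ (d - 1)
      = ∏ m, (∑ i' : Fin J → Fin n,
          if ∀ s ∈ insert k (V m), i' s = i s then M i' else 0) := by
  have : Nonempty (Fin d) := by
    obtain ⟨b, hb⟩ := card_pos.1 (lt_of_lt_of_le two_pos hk)
    exact (hVcover b ((G.mem_neighborFinset k b).1 hb).ne.symm).nonempty
  obtain ⟨f, hf, hMf⟩ := exists_blockwise_factorization hVcover hEdge K u
  simpa [marginal, sum_filter] using mul_marginal_singleton_pow_eq_prod_marginal_insert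
    hVk hVcover hVdisj hf (fun x => (hM x).trans (hMf x)) i

/-- Decoupling of a tree-structured tensor at an interior node `k`: if removing `k` splits
the tree into subtrees with vertex sets `V 1, …, V d`, then the variables in different
subtrees are conditionally independent given the index at `k`:
`M(i) · (P_k(M)_{i_k})^{d-1} = Π_m P_{V_m ∪ {k}}(M)(i)`. -/
theorem tree_decoupling_at_interior_node {n J d : ℕ}
    (E : Finset (Fin J × Fin J)) (G : SimpleGraph (Fin J)) [DecidableRel G.Adj]
    (hG : ∀ a b, G.Adj a b ↔ ((a, b) ∈ E ∨ (b, a) ∈ E))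
    (htree : G.IsTree)
    (K : Fin J → Fin J → Matrix (Fin n) (Fin n) ℝ)
    (hpos : ∀ p ∈ E, ∀ x y, 0 < K p.1 p.2 x y)
    (u : Fin J → Fin n → ℝ) (hu : ∀ j x, 0 < u j x)
    (k : Fin J) (hk : 2 ≤ (G.neighborFinset k).card)
    (V : Fin d → Finset (Fin J))
    (hVk : ∀ m, k ∉ V m)
    (hVcover : ∀ x : Fin J, x ≠ k → ∃ m, x ∈ V m)
    (hVdisj : ∀ m m', m ≠ m' → Disjoint (V m) (V m'))
    (hEdge : ∀ e ∈ E, ∃ m, (e.1 ∈ V m ∨ e.1 = k) ∧ (e.2 ∈ V m ∨ e.2 = k))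
    (M : (Fin J → Fin n) → ℝ)
    (hM : ∀ i, M i = (∏ e ∈ E, K e.1 e.2 (i e.1) (i e.2)) * ∏ j, u j (i j))
    (i : Fin J → Fin n) :
    M i * (∑ i' : Fin J → Fin n, if i' k = i k then M i' else 0) ^ (d - 1)
      = ∏ m, (∑ i' : Fin J → Fin n,
          if ∀ s ∈ insert k (V m), i' s = i s then M i' else 0) :=
  tree_decoupling_at_interior_node_general E G K u k hk V hVk hVcover hVdisj hEdge M hM i
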